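/- arXiv:2105.12709 — 3 statements merged into one kernel-verified Lean document; each statement's English description precedes it below -/
import Mathlib

section
/- There is a universal constant C > 0 (independent of m, n, and p) such that for all positive integers m, n, all p ∈ (0,1), all integers t, and independent random variables X ∼ Bin(n,p) and Y ∼ Bin(m,p), one has |ℙ[X − Y = t + 1] − ℙ[X − Y = t]| ≤ C / ((m + n) p (1 − p)). -/
open MeasureTheory ProbabilityTheory Finset

/-- The Bernoulli(p) measure on `Bool`. -/
noncomputable def bernoulliMeasure (p : ℝ) : Measure Bool :=
  p.toNNReal • Measure.dirac true + (1 - p).toNNReal • Measure.dirac false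

instance (p : ℝ) : IsFiniteMeasure (bernoulliMeasure p) := by
  unfold _root_.bernoulliMeasure; infer_instance

/-- The binomial distribution `Bin(n,p)`: the law of the number of successes in `n`
independent Bernoulli(p) trials. -/
noncomputable def binomMeasure (n : ℕ) (p : ℝ) : Measure ℕ :=
  Measure.map (fun f : Fin n → Bool => (univ.filter fun i => f i = true).card)
    (Measure.pi fun _ : Fin n => bernoulliMeasure p)

instance (n : ℕ) (p : ℝ) : IsFiniteMeasure (binomMeasure n p) :=
  Measure.isFiniteMeasure_map _ _

/-!
For `φₖ(θ) = (1 - p + p e^{iθ})^k`, the law of `X - Y` has Fourier series `φₙ(θ) φₘ(-θ)`, so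
`2π (ℙ[X - Y = t + 1] - ℙ[X - Y = t]) = ∫_{-π}^{π} φₙ(θ) φₘ(-θ) (e^{-i(t+1)θ} - e^{-itθ}) dθ`.
Since `|1 - p + p e^{iθ}|² = 1 - 2p(1-p)(1 - cos θ) ≤ exp(-2p(1-p)(1 - cos θ))` and
`1 - cos θ ≥ 2θ²/π²` on `[-π, π]`, the integrand is at most `|θ| exp(-aθ²)` with
`a = 2(m+n)p(1-p)/π²`, and `∫_{-π}^{π} |θ| exp(-aθ²) dθ ≤ 1/a`. This gives the bound with `C = π/4`.
-/

open Real
open scoped Complex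
open Complex (I)

noncomputable def binomProb (n : ℕ) (p : ℝ) (k : ℕ) : ℝ :=
  n.choose k * p ^ k * (1 - p) ^ (n - k)

lemma binomProb_nonneg {p : ℝ} (hp0 : 0 ≤ p) (hp1 : p ≤ 1) (n k : ℕ) : 0 ≤ binomProb n p k := by
  have : 0 ≤ 1 - p := by linarith
  unfold binomProb
  positivity

lemma binomProb_eq_zero_of_lt {n k : ℕ} (h : n < k) (p : ℝ) : binomProb n p k = 0 := by
  simp [binomProb, Nat.choose_eq_zero_of_lt h]

lemma bernoulliMeasure_singleton (p : ℝ) (b : Bool) :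
    _root_.bernoulliMeasure p {b} = ENNReal.ofReal (if b then p else 1 - p) := by
  cases b <;> simp [_root_.bernoulliMeasure, ENNReal.ofReal, -Measure.coe_nnreal_smul]

lemma card_filter_card_true_eq_choose (n k : ℕ) :
    #{f : Fin n → Bool | #{i | f i = true} = k} = n.choose k := by
  rw [show n.choose k = #(powersetCard k (univ : Finset (Fin n))) by simp]
  refine card_nbij' (fun f ↦ ({i | f i = true} : Finset _)) (fun s i ↦ decide (i ∈ s))
    ?_ ?_ ?_ ?_ <;> intro x <;> simp +contextual

lemma binomMeasure_singleton {p : ℝ} (hp0 : 0 ≤ p) (hp1 : p ≤ 1) (n k : ℕ) :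
    binomMeasure n p {k} = ENNReal.ofReal (binomProb n p k) := by
  have hq : 0 ≤ 1 - p := by linarith
  have hfiber : ∀ f ∈ ({f : Fin n → Bool | #{i | f i = true} = k} : Finset _),
      Measure.pi (fun _ ↦ _root_.bernoulliMeasure p) {f} =
        ENNReal.ofReal (p ^ k * (1 - p) ^ (n - k)) := by
    intro f hf
    have hcompl : #{i | ¬f i = true} = n - k := by
      have := card_filter_add_card_filter_not (s := univ) (fun i ↦ f i = true)
      simp only [card_univ, Fintype.card_fin, (mem_filter.mp hf).2] at this
      omega
    simp only [Measure.pi_singleton, bernoulliMeasure_singleton]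
    rw [← ENNReal.ofReal_prod_of_nonneg (fun i _ ↦ by split_ifs <;> assumption), prod_ite,
      prod_const, prod_const, (mem_filter.mp hf).2, hcompl]
  rw [binomMeasure, Measure.map_apply (measurable_of_finite _) (measurableSet_singleton k)]
  have hpre : (fun f : Fin n → Bool ↦ #{i | f i = true}) ⁻¹' {k} =
      ↑({f : Fin n → Bool | #{i | f i = true} = k} : Finset _) := by ext; simp
  rw [hpre, ← sum_measure_singleton, sum_congr rfl hfiber, sum_const,
    card_filter_card_true_eq_choose, nsmul_eq_mul, binomProb, mul_assoc,
    ENNReal.ofReal_mul (Nat.cast_nonneg _), ENNReal.ofReal_natCast]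

lemma measure_eq_sum_filter_of_support_subset {α : Type*} [MeasurableSpace α] [Countable α]
    [MeasurableSingletonClass α] (μ : Measure α) {s : Finset α} (hs : ∀ x ∉ s, μ {x} = 0)
    (S : Set α) [DecidablePred (· ∈ S)] : μ S = ∑ x ∈ s with x ∈ S, μ {x} := by
  rw [← Measure.tsum_indicator_apply_singleton μ S S.to_countable.measurableSet,
    tsum_eq_sum (s := s) fun x hx ↦ by simp [hs x hx], sum_filter]
  exact sum_congr rfl fun x _ ↦ Set.indicator_apply _ _ _

lemma prod_binomMeasure_apply {p : ℝ} (hp0 : 0 ≤ p) (hp1 : p ≤ 1) (n m : ℕ) (S : Set (ℕ × ℕ))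
    [DecidablePred (· ∈ S)] :
    ((binomMeasure n p).prod (binomMeasure m p) S).toReal =
      ∑ x ∈ range (n + 1) ×ˢ range (m + 1) with x ∈ S, binomProb n p x.1 * binomProb m p x.2 := by
  have hsingleton : ∀ x : ℕ × ℕ, (binomMeasure n p).prod (binomMeasure m p) {x} =
      ENNReal.ofReal (binomProb n p x.1 * binomProb m p x.2) := fun ⟨k, l⟩ ↦ by
    rw [← Set.singleton_prod_singleton, Measure.prod_prod, binomMeasure_singleton hp0 hp1,
      binomMeasure_singleton hp0 hp1, ENNReal.ofReal_mul (binomProb_nonneg hp0 hp1 n k)]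
  have hsupport : ∀ x ∉ range (n + 1) ×ˢ range (m + 1),
      (binomMeasure n p).prod (binomMeasure m p) {x} = 0 := fun ⟨k, l⟩ hx ↦ by
    rw [mem_product, mem_range, mem_range, not_and_or, not_lt, not_lt] at hx
    rcases hx with hk | hl
    · simp [hsingleton, binomProb_eq_zero_of_lt (Nat.lt_of_succ_le hk)]
    · simp [hsingleton, binomProb_eq_zero_of_lt (Nat.lt_of_succ_le hl)]
  rw [measure_eq_sum_filter_of_support_subset _ hsupport, ENNReal.toReal_sum]
  · exact sum_congr rfl fun x _ ↦ by
      rw [hsingleton, ENNReal.toReal_ofReal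
        (mul_nonneg (binomProb_nonneg hp0 hp1 _ _) (binomProb_nonneg hp0 hp1 _ _))]
  · simp [hsingleton]

lemma integral_exp_int_mul_I (d : ℤ) :
    ∫ θ in -π..π, cexp (d * I * θ) = if d = 0 then (2 * π : ℂ) else 0 := by
  split_ifs with hd
  · simp [hd, two_mul]
  have hdI : (d : ℂ) * I ≠ 0 := by simp [hd, Complex.I_ne_zero]
  have hperiodic : cexp (d * I * π) = cexp (d * I * ↑(-π)) := by
    rw [← mul_one (cexp (_ * ↑(-π))), ← Complex.exp_int_mul_two_pi_mul_I d, ← Complex.exp_add]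
    push_cast
    ring_nf
  rw [integral_exp_mul_complex hdI, hperiodic, sub_self, zero_div]

lemma integral_sum_mul_exp {ι : Type*} (s : Finset ι) (c : ι → ℂ) (d : ι → ℤ) (t : ℤ) :
    ∫ θ in -π..π, (∑ x ∈ s, c x * cexp (d x * I * θ)) * cexp (-(t * I * θ)) =
      2 * π * ∑ x ∈ s with d x = t, c x := by
  have hterm : ∀ x (θ : ℝ), c x * cexp (d x * I * θ) * cexp (-(t * I * θ)) =
      c x * cexp (((d x - t : ℤ) : ℂ) * I * θ) := fun x θ ↦ by
    rw [mul_assoc, ← Complex.exp_add]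
    push_cast
    ring_nf
  simp_rw [sum_mul, hterm]
  rw [intervalIntegral.integral_finsetSum
    fun x _ ↦ (by fun_prop : Continuous _).intervalIntegrable _ _, sum_filter, mul_sum]
  refine sum_congr rfl fun x _ ↦ ?_
  rw [intervalIntegral.integral_const_mul, integral_exp_int_mul_I]
  simp only [sub_eq_zero]
  split_ifs <;> ring

noncomputable def binomCharFun (n : ℕ) (p θ : ℝ) : ℂ :=
  ((1 - p : ℝ) + p * cexp (I * θ)) ^ n

@[fun_prop]
lemma continuous_binomCharFun (n : ℕ) (p : ℝ) : Continuous (binomCharFun n p) := by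
  unfold binomCharFun
  fun_prop

lemma binomCharFun_eq_sum (n : ℕ) (p θ : ℝ) :
    binomCharFun n p θ = ∑ k ∈ range (n + 1), (binomProb n p k : ℂ) * cexp (k * I * θ) := by
  rw [binomCharFun, add_comm, add_pow]
  refine sum_congr rfl fun k _ ↦ ?_
  rw [mul_pow, ← Complex.exp_nat_mul, binomProb]
  push_cast
  ring_nf

noncomputable def diffProb (n m : ℕ) (p : ℝ) (s : ℤ) : ℝ :=
  ∑ x ∈ range (n + 1) ×ˢ range (m + 1) with (x.1 : ℤ) - x.2 = s,
    binomProb n p x.1 * binomProb m p x.2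

lemma integral_binomCharFun_mul (n m : ℕ) (p : ℝ) (s : ℤ) :
    ∫ θ in -π..π, binomCharFun n p θ * binomCharFun m p (-θ) * cexp (-(s * I * θ)) =
      2 * π * diffProb n m p s := by
  have hprod : ∀ θ : ℝ, binomCharFun n p θ * binomCharFun m p (-θ) =
      ∑ x ∈ range (n + 1) ×ˢ range (m + 1), ((binomProb n p x.1 * binomProb m p x.2 : ℝ) : ℂ) *
        cexp ((((x.1 : ℤ) - x.2 : ℤ) : ℂ) * I * θ) := fun θ ↦ by
    rw [binomCharFun_eq_sum, binomCharFun_eq_sum, sum_mul_sum, ← sum_product']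
    refine sum_congr rfl fun x _ ↦ ?_
    rw [mul_mul_mul_comm, ← Complex.exp_add]
    push_cast
    ring_nf
  simp_rw [hprod]
  rw [integral_sum_mul_exp, diffProb]
  push_cast
  rfl

lemma norm_one_sub_add_mul_exp_le (p θ : ℝ) :
    ‖((1 - p : ℝ) : ℂ) + p * cexp (I * θ)‖ ≤ rexp (-(p * (1 - p) * (1 - cos θ))) := by
  have hnormSq :
      ‖((1 - p : ℝ) : ℂ) + p * cexp (I * θ)‖ ^ 2 = 1 - 2 * (p * (1 - p) * (1 - cos θ)) := by
    rw [mul_comm I, Complex.exp_mul_I, Complex.sq_norm, Complex.normSq_apply]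
    simp [Complex.cos_ofReal_re, Complex.sin_ofReal_re]
    linear_combination p ^ 2 * sin_sq_add_cos_sq θ
  rw [← sq_le_sq₀ (norm_nonneg _) (exp_pos _).le, hnormSq, sq, ← Real.exp_add]
  linarith [add_one_le_exp (-(p * (1 - p) * (1 - cos θ)) + -(p * (1 - p) * (1 - cos θ)))]

lemma norm_binomCharFun_le (n : ℕ) (p θ : ℝ) :
    ‖binomCharFun n p θ‖ ≤ rexp (-(p * (1 - p) * (1 - cos θ))) ^ n := by
  rw [binomCharFun, norm_pow]
  exact pow_le_pow_left₀ (norm_nonneg _) (norm_one_sub_add_mul_exp_le p θ) n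

lemma norm_binomCharFun_mul_le {p : ℝ} (hp0 : 0 ≤ p) (hp1 : p ≤ 1) (n m : ℕ) {θ : ℝ}
    (hθ : |θ| ≤ π) :
    ‖binomCharFun n p θ * binomCharFun m p (-θ)‖ ≤
      rexp (-(2 * ((n + m) * (p * (1 - p))) / π ^ 2) * θ ^ 2) := by
  have hvar : 0 ≤ (n + m) * (p * (1 - p)) := by
    have : 0 ≤ 1 - p := by linarith
    positivity
  have hcos : 2 / π ^ 2 * θ ^ 2 ≤ 1 - cos θ := by linarith [cos_le_one_sub_mul_cos_sq hθ]
  calc ‖binomCharFun n p θ * binomCharFun m p (-θ)‖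
      ≤ rexp (-(p * (1 - p) * (1 - cos θ))) ^ n * rexp (-(p * (1 - p) * (1 - cos θ))) ^ m := by
        rw [norm_mul]
        gcongr
        · exact norm_binomCharFun_le n p θ
        · simpa using norm_binomCharFun_le m p (-θ)
    _ = rexp (-((n + m) * (p * (1 - p)) * (1 - cos θ))) := by
        rw [← pow_add, ← Real.exp_nat_mul]
        push_cast
        ring_nf
    _ ≤ rexp (-(2 * ((n + m) * (p * (1 - p))) / π ^ 2) * θ ^ 2) := by
        rw [Real.exp_le_exp, neg_mul, neg_le_neg_iff,
          show 2 * ((n + m) * (p * (1 - p))) / π ^ 2 * θ ^ 2 =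
            (n + m) * (p * (1 - p)) * (2 / π ^ 2 * θ ^ 2) by ring]
        gcongr

lemma integral_abs_mul_exp_neg_mul_sq_le {a : ℝ} (ha : 0 < a) {c : ℝ} (hc : 0 ≤ c) :
    ∫ θ in -c..c, |θ| * rexp (-a * θ ^ 2) ≤ a⁻¹ := by
  set f : ℝ → ℝ := fun θ ↦ |θ| * rexp (-a * θ ^ 2)
  have hf : Continuous f := by fun_prop
  have hantideriv : ∀ θ, HasDerivAt (fun θ ↦ -rexp (-a * θ ^ 2) / (2 * a))
      (θ * rexp (-a * θ ^ 2)) θ := fun θ ↦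
    (((hasDerivAt_pow 2 θ).const_mul (-a)).exp.neg.div_const (2 * a)).congr_deriv
      (by field_simp; norm_num; ring)
  have hhalf : ∫ θ in (0)..c, f θ = (1 - rexp (-a * c ^ 2)) / (2 * a) := by
    rw [intervalIntegral.integral_congr (g := fun θ ↦ θ * rexp (-a * θ ^ 2)) fun θ hθ ↦ by
        rw [Set.uIcc_of_le hc] at hθ; simp only [f, abs_of_nonneg hθ.1],
      intervalIntegral.integral_eq_sub_of_hasDerivAt (fun θ _ ↦ hantideriv θ)
        ((by fun_prop : Continuous fun θ ↦ θ * rexp (-a * θ ^ 2)).intervalIntegrable _ _)]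
    simp
    ring
  have hsymm : ∫ θ in -c..0, f θ = ∫ θ in (0)..c, f θ := by
    rw [← neg_zero, ← intervalIntegral.integral_comp_neg]
    simp [f]
  rw [← intervalIntegral.integral_add_adjacent_intervals (hf.intervalIntegrable _ 0)
    (hf.intervalIntegrable 0 _), hsymm, hhalf, ← two_mul, ← mul_div_assoc,
    mul_div_mul_left _ _ two_ne_zero, inv_eq_one_div]
  gcongr
  linarith [exp_pos (-a * c ^ 2)]

lemma norm_exp_mul_I_sub_exp_mul_I_le (u v : ℝ) : ‖cexp (u * I) - cexp (v * I)‖ ≤ |u - v| := by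
  have hfactor : cexp (u * I) - cexp (v * I) = cexp (v * I) * (cexp (I * ↑(u - v)) - 1) := by
    rw [mul_sub, mul_one, ← Complex.exp_add]
    push_cast
    ring_nf
  rw [hfactor, norm_mul, Complex.norm_exp_ofReal_mul_I, one_mul, ← Real.norm_eq_abs]
  exact Real.norm_exp_I_mul_ofReal_sub_one_le

lemma integral_binomCharFun_mul_exp_sub (n m : ℕ) (p : ℝ) (t : ℤ) :
    ∫ θ in -π..π, binomCharFun n p θ * binomCharFun m p (-θ) *
        (cexp (-((t + 1 : ℤ) * I * θ)) - cexp (-(t * I * θ))) =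
      2 * π * (diffProb n m p (t + 1) - diffProb n m p t : ℝ) := by
  simp only [mul_sub]
  rw [intervalIntegral.integral_sub ((by fun_prop : Continuous _).intervalIntegrable _ _)
    ((by fun_prop : Continuous _).intervalIntegrable _ _), integral_binomCharFun_mul,
    integral_binomCharFun_mul]
  push_cast
  ring

lemma norm_binomCharFun_mul_exp_sub_le {p : ℝ} (hp0 : 0 ≤ p) (hp1 : p ≤ 1) (n m : ℕ) (t : ℤ)
    {θ : ℝ} (hθ : |θ| ≤ π) :
    ‖binomCharFun n p θ * binomCharFun m p (-θ) *
        (cexp (-((t + 1 : ℤ) * I * θ)) - cexp (-(t * I * θ)))‖ ≤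
      |θ| * rexp (-(2 * ((n + m) * (p * (1 - p))) / π ^ 2) * θ ^ 2) := by
  have hexp := norm_exp_mul_I_sub_exp_mul_I_le (-((t + 1 : ℤ) * θ)) (-(t * θ))
  rw [show -((t + 1 : ℤ) * θ) - -(t * θ) = -θ by push_cast; ring, abs_neg] at hexp
  have hexponent : ∀ s : ℂ, -(s * I * θ) = -(s * θ) * I := fun s ↦ by ring
  rw [norm_mul, mul_comm |θ|, hexponent, hexponent]
  push_cast at hexp ⊢
  exact mul_le_mul (norm_binomCharFun_mul_le hp0 hp1 n m hθ) hexp (norm_nonneg _) (exp_pos _).le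

lemma abs_diffProb_succ_sub_le {p : ℝ} (hp0 : 0 < p) (hp1 : p < 1) {n m : ℕ} (hnm : 0 < n + m)
    (t : ℤ) : |diffProb n m p (t + 1) - diffProb n m p t| ≤ π / 4 / ((n + m) * p * (1 - p)) := by
  set a : ℝ := 2 * ((n + m) * (p * (1 - p))) / π ^ 2
  have hvar : 0 < (n + m) * p * (1 - p) := by
    have : (0 : ℝ) < n + m := by exact_mod_cast hnm
    have : 0 < 1 - p := by linarith
    positivity
  have ha : 0 < a :=
    div_pos (mul_pos two_pos (by simpa only [mul_assoc] using hvar)) (by positivity)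
  have hbound : 2 * π * |diffProb n m p (t + 1) - diffProb n m p t| ≤ a⁻¹ :=
    calc 2 * π * |diffProb n m p (t + 1) - diffProb n m p t|
        = ‖∫ θ in -π..π, binomCharFun n p θ * binomCharFun m p (-θ) *
            (cexp (-((t + 1 : ℤ) * I * θ)) - cexp (-(t * I * θ)))‖ := by
          rw [integral_binomCharFun_mul_exp_sub, norm_mul, Complex.norm_real, Real.norm_eq_abs,
            show ‖(2 * π : ℂ)‖ = 2 * π by simp [pi_pos.le]]
      _ ≤ ∫ θ in -π..π, |θ| * rexp (-a * θ ^ 2) :=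
          intervalIntegral.norm_integral_le_of_norm_le (by linarith [pi_pos])
            (Filter.Eventually.of_forall fun θ hθ ↦ norm_binomCharFun_mul_exp_sub_le hp0.le
              hp1.le n m t (abs_le.mpr (Set.Ioc_subset_Icc_self hθ)))
            ((by fun_prop : Continuous _).intervalIntegrable _ _)
      _ ≤ a⁻¹ := integral_abs_mul_exp_neg_mul_sq_le ha pi_pos.le
  calc |diffProb n m p (t + 1) - diffProb n m p t|
      ≤ (2 * π)⁻¹ * a⁻¹ := by
        rwa [← le_div_iff₀' (by positivity), div_eq_inv_mul] at hbound
    _ = π / 4 / ((n + m) * p * (1 - p)) := by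
        simp only [a]
        field_simp
        ring

/-- **Lemma (binomial shift).** There is a universal constant `C > 0` such that for all
positive integers `m, n`, all `p ∈ (0,1)`, independent `X ∼ Bin(n,p)`, `Y ∼ Bin(m,p)`
and every integer `t`, `|ℙ[X - Y = t + 1] - ℙ[X - Y = t]| ≤ C / ((m+n) p (1-p))`. -/
theorem binomial_difference_shift :
    ∃ C : ℝ, 0 < C ∧ ∀ m n : ℕ, 0 < m → 0 < n → ∀ p : ℝ, p ∈ Set.Ioo (0 : ℝ) 1 →
      ∀ t : ℤ,
        |(((binomMeasure n p).prod (binomMeasure m p))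
            {q : ℕ × ℕ | (q.1 : ℤ) - (q.2 : ℤ) = t + 1}).toReal -
         (((binomMeasure n p).prod (binomMeasure m p))
            {q : ℕ × ℕ | (q.1 : ℤ) - (q.2 : ℤ) = t}).toReal| ≤
          C / ((m + n : ℝ) * p * (1 - p)) := by
  refine ⟨1, one_pos, fun m n hm _ p ⟨hp0, hp1⟩ t ↦ ?_⟩
  rw [prod_binomMeasure_apply hp0.le hp1.le, prod_binomMeasure_apply hp0.le hp1.le]
  calc _ ≤ π / 4 / ((n + m) * p * (1 - p)) := abs_diffProb_succ_sub_le hp0 hp1 (by omega) t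
    _ ≤ 1 / ((m + n : ℝ) * p * (1 - p)) := by
        rw [add_comm (n : ℝ)]
        gcongr
        linarith [pi_le_four]
end

section
/- Let δ ∈ (0,1), let p ∈ (0,1) and β > 0, and let G be a (p,β)-jumbled graph on n vertices with minimum degree at least δnp. Let s : V(G) → {−1,+1} be any opinion assignment and let s' be the opinion obtained from s by one step of majority dynamics. If ∑_{v∈V(G)} s(v) ≥ 8β/(p√δ), then ∑_{v∈V(G)} s'(v) ≥ (1 − δ/2)·n. -/
open Finset

/-- The number of edges between `U` and `W`, counted as ordered pairs
`(u,w) ∈ U × W` with `uw` an edge. -/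
def edgeCount {V : Type*} [Fintype V] (G : SimpleGraph V) [DecidableRel G.Adj]
    (U W : Finset V) : ℕ :=
  ∑ u ∈ U, ∑ w ∈ W, if G.Adj u w then 1 else 0

/-- A graph `G` is `(p,β)`-jumbled if `|e(U,W) - p|U||W|| ≤ β√(|U||W|)` for all
vertex subsets `U, W`. -/
def IsJumbled {V : Type*} [Fintype V] (G : SimpleGraph V) [DecidableRel G.Adj]
    (p β : ℝ) : Prop :=
  ∀ U W : Finset V,
    |(edgeCount G U W : ℝ) - p * U.card * W.card| ≤
      β * Real.sqrt ((U.card : ℝ) * W.card)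

/-- One step of majority dynamics on the graph `G`: each vertex simultaneously adopts
the sign of the sum of its neighbours' opinions, keeping its opinion on a tie. -/
def graphMajStep {V : Type*} [Fintype V] (G : SimpleGraph V) [DecidableRel G.Adj]
    (s : V → ℤ) : V → ℤ :=
  fun v =>
    let t : ℤ := ∑ u ∈ G.neighborFinset v, s u
    if 0 < t then 1 else if t < 0 then -1 else s v

/-!
Let `B` be the set of vertices whose new opinion is `-1`, and `P`, `M` the vertices of old
opinion `+1`, `-1`. Every `v ∈ B` sees a nonpositive neighbourhood sum, so summing over `B`
gives `e(B,P) ≤ e(B,M)`. Jumbledness turns this into `p |B| (|P| - |M|) ≤ 2β √(|B| n)`, and the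
bias `|P| - |M| ≥ 8β / (p √δ)` then forces `|B| ≤ δn/16`, whence `∑ s' = n - 2|B| ≥ (1 - δ/2) n`.
-/

lemma sum_eq_card_filter_sub_card_filter {α : Type*} (f : α → ℤ)
    (hf : ∀ a, f a = 1 ∨ f a = -1) (s : Finset α) :
    ∑ a ∈ s, f a = #{a ∈ s | f a = 1} - #{a ∈ s | f a = -1} := by
  simp only [natCast_card_filter, ← sum_sub_distrib]
  refine sum_congr rfl fun a _ => ?_
  rcases hf a with h | h <;> simp [h]

lemma sum_eq_card_sub_two_mul_card_filter {α : Type*} (f : α → ℤ)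
    (hf : ∀ a, f a = 1 ∨ f a = -1) (s : Finset α) :
    ∑ a ∈ s, f a = #s - 2 * #{a ∈ s | f a = -1} := by
  rw [natCast_card_filter, mul_sum, card_eq_sum_ones, Nat.cast_sum, ← sum_sub_distrib]
  refine sum_congr rfl fun a _ => ?_
  rcases hf a with h | h <;> simp [h]

section

variable {V : Type*} [Fintype V] (G : SimpleGraph V) [DecidableRel G.Adj]

lemma edgeCount_sub_edgeCount_eq_sum_neighborFinset (s : V → ℤ)
    (hs : ∀ v, s v = 1 ∨ s v = -1) (U : Finset V) :
    (edgeCount G U {w | s w = 1} : ℤ) - edgeCount G U {w | s w = -1} =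
      ∑ u ∈ U, ∑ w ∈ G.neighborFinset u, s w := by
  simp only [edgeCount, Nat.cast_sum, ← sum_sub_distrib, sum_filter]
  refine sum_congr rfl fun u _ => ?_
  rw [SimpleGraph.neighborFinset_eq_filter, sum_filter]
  refine sum_congr rfl fun w _ => ?_
  rcases hs w with h | h <;> by_cases hadj : G.Adj u w <;> simp [h, hadj]

lemma graphMajStep_eq_one_or_eq_neg_one (s : V → ℤ) (hs : ∀ v, s v = 1 ∨ s v = -1)
    (v : V) : graphMajStep G s v = 1 ∨ graphMajStep G s v = -1 := by
  dsimp only [graphMajStep]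
  split_ifs
  exacts [Or.inl rfl, Or.inr rfl, hs v]

lemma sum_neighborFinset_nonpos_of_graphMajStep_eq_neg_one (s : V → ℤ) {v : V}
    (hv : graphMajStep G s v = -1) : ∑ u ∈ G.neighborFinset v, s u ≤ 0 := by
  by_contra! h
  simp [graphMajStep, h] at hv

variable {G}

lemma IsJumbled.mul_card_sub_card_le {p β : ℝ} (hG : IsJumbled G p β) (hβ : 0 ≤ β)
    {U W₁ W₂ : Finset V} (h : edgeCount G U W₁ ≤ edgeCount G U W₂) :
    p * #U * (#W₁ - #W₂) ≤ 2 * β * √(#U * Fintype.card V) := by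
  have hsqrt (W : Finset V) : β * √(#U * #W) ≤ β * √(#U * Fintype.card V) := by
    gcongr
    exact_mod_cast card_le_univ W
  have h₁ := (abs_le.mp (hG U W₁)).1
  have h₂ := (abs_le.mp (hG U W₂)).2
  have : (edgeCount G U W₁ : ℝ) ≤ edgeCount G U W₂ := by exact_mod_cast h
  linarith [hsqrt W₁, hsqrt W₂]

lemma le_of_mul_le_two_mul_sqrt {p β δ b n S : ℝ} (hβ : 0 < β) (hδ : 0 ≤ δ) (hb : 0 ≤ b)
    (hn : 0 ≤ n) (hS : 8 * β ≤ S * (p * √δ)) (h : p * b * S ≤ 2 * β * √(b * n)) :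
    16 * b ≤ δ * n := by
  have h4 : 4 * b ≤ √(b * n * δ) := by
    refine le_of_mul_le_mul_left ?_ (by positivity : (0 : ℝ) < 2 * β)
    calc 2 * β * (4 * b) ≤ S * (p * √δ) * b := by linarith [mul_le_mul_of_nonneg_right hS hb]
      _ = p * b * S * √δ := by ring
      _ ≤ 2 * β * √(b * n) * √δ := by gcongr
      _ = 2 * β * √(b * n * δ) := by rw [Real.sqrt_mul (by positivity) δ, mul_assoc]
  have hsq := (Real.le_sqrt (by positivity) (by positivity)).mp h4
  rcases hb.eq_or_lt with rfl | hb
  · simp only [mul_zero]; positivity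
  · nlinarith

end

theorem jumbled_majority_step_expand_general {V : Type*} [Fintype V]
    (G : SimpleGraph V) [DecidableRel G.Adj] (δ p β : ℝ)
    (hδ : δ ∈ Set.Ioo (0 : ℝ) 1) (hp : p ∈ Set.Ioo (0 : ℝ) 1) (hβ : 0 < β)
    (hjumbled : IsJumbled G p β)
    (s : V → ℤ) (hs : ∀ v, s v = 1 ∨ s v = -1)
    (hsum : 8 * β / (p * Real.sqrt δ) ≤ ((∑ v, s v : ℤ) : ℝ)) :
    (1 - δ/2) * (Fintype.card V) ≤ ((∑ v, graphMajStep G s v : ℤ) : ℝ) := by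
  set B : Finset V := {v | graphMajStep G s v = -1}
  have hedges : edgeCount G B {w | s w = 1} ≤ edgeCount G B {w | s w = -1} := by
    have hB : ∑ v ∈ B, ∑ u ∈ G.neighborFinset v, s u ≤ 0 := sum_nonpos fun v hv =>
      sum_neighborFinset_nonpos_of_graphMajStep_eq_neg_one G s (mem_filter.mp hv).2
    rw [← edgeCount_sub_edgeCount_eq_sum_neighborFinset G s hs] at hB
    omega
  have hB : 16 * (#B : ℝ) ≤ δ * Fintype.card V := by
    refine le_of_mul_le_two_mul_sqrt hβ hδ.1.le (by positivity) (by positivity) ?_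
      (hjumbled.mul_card_sub_card_le hβ.le hedges)
    rw [sum_eq_card_filter_sub_card_filter s hs] at hsum
    push_cast at hsum
    have : 0 < p * √δ := mul_pos hp.1 (Real.sqrt_pos.mpr hδ.1)
    exact (div_le_iff₀ this).mp hsum
  rw [sum_eq_card_sub_two_mul_card_filter _ (graphMajStep_eq_one_or_eq_neg_one G s hs), card_univ]
  push_cast
  nlinarith [hδ.1]

/-- **One majority step from a `Θ(β/p)` bias to 99% agreement on jumbled graphs.**
If `G` is a `(p,β)`-jumbled graph on `n` vertices with minimum degree at least `δnp`
and the ±1 opinion `s` satisfies `∑ᵥ s(v) ≥ 8β/(p√δ)`, then after one step of majority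
dynamics `∑ᵥ s'(v) ≥ (1 - δ/2) n`. -/
theorem jumbled_majority_step_expand {V : Type*} [Fintype V]
    (G : SimpleGraph V) [DecidableRel G.Adj] (δ p β : ℝ)
    (hδ : δ ∈ Set.Ioo (0 : ℝ) 1) (hp : p ∈ Set.Ioo (0 : ℝ) 1) (hβ : 0 < β)
    (hjumbled : IsJumbled G p β)
    (hdeg : ∀ v : V, δ * (Fintype.card V) * p ≤ (G.degree v : ℝ))
    (s : V → ℤ) (hs : ∀ v, s v = 1 ∨ s v = -1)
    (hsum : 8 * β / (p * Real.sqrt δ) ≤ ((∑ v, s v : ℤ) : ℝ)) :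
    (1 - δ/2) * (Fintype.card V) ≤ ((∑ v, graphMajStep G s v : ℤ) : ℝ) :=
  jumbled_majority_step_expand_general G δ p β hδ hp hβ hjumbled s hs hsum
end

section
/- Let δ ∈ (0,1), let p ∈ (0,1) and β > 0, and let G be a (p,β)-jumbled graph on n vertices with minimum degree at least δnp. Let s : V(G) → {−1,+1} be any opinion assignment and let s' be the opinion obtained from s by one step of majority dynamics. If ∑_{v∈V(G)} s(v) ≥ (1 − α)·n for some α ≤ δ/2, then ∑_{v∈V(G)} s'(v) ≥ (1 − α·16β²/(δ²n²p²))·n. -/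
open Finset

/-!
Let `M` and `M'` be the sets of `-1` opinions before and after the step, so that the sums are
`n - 2|M|` and `n - 2|M'|`, and `|M| ≤ αn/2 ≤ δn/4`. A vertex of `M'` has no positive
majority among its neighbours, so at least half of its at least `δnp` neighbours lie in `M`;
hence `e(M', M) ≥ |M'| δnp/2`. Jumbledness bounds `e(M', M)` by
`p|M'||M| + β√(|M'||M|) ≤ |M'| δnp/4 + β√(|M'||M|)`, so `|M'| δnp/4 ≤ β√(|M'||M|)`,
and squaring gives `|M'| ≤ 16β²|M|/(δnp)²`.
-/

lemma sum_eq_card_sub_two_mul_card_filter_eq_neg_one {ι : Type*} {s : ι → ℤ}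
    (hs : ∀ i, s i = 1 ∨ s i = -1) (T : Finset ι) :
    ∑ i ∈ T, s i = #T - 2 * #{i ∈ T | s i = -1} := by
  have hs' : ∀ i, s i = 1 - 2 * if s i = -1 then 1 else 0 := fun i => by
    rcases hs i with h | h <;> simp [h]
  rw [sum_congr rfl fun i _ => hs' i, sum_sub_distrib, ← mul_sum, sum_boole]
  simp

section

variable {V : Type*} [Fintype V] (G : SimpleGraph V) [DecidableRel G.Adj]

lemma edgeCount_eq_sum_card_filter_adj (U W : Finset V) :
    edgeCount G U W = ∑ u ∈ U, #{w ∈ W | G.Adj u w} := by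
  simp only [edgeCount, sum_boole, Nat.cast_id]

variable {G} in
lemma IsJumbled.card_mul_sq_le {p β D : ℝ} (hG : IsJumbled G p β) {U W : Finset V}
    (hD : 0 ≤ D) (hpW : p * #W ≤ D / 2) (hUW : ∀ u ∈ U, D ≤ #{w ∈ W | G.Adj u w}) :
    #U * D ^ 2 ≤ 4 * β ^ 2 * #W := by
  have hlower : #U * D ≤ edgeCount G U W := by
    rw [edgeCount_eq_sum_card_filter_adj]
    push_cast
    simpa using sum_le_sum hUW
  have hupper := (abs_le.mp (hG U W)).2
  have hpUW : p * #U * #W ≤ #U * D / 2 := by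
    linarith [mul_le_mul_of_nonneg_left hpW (Nat.cast_nonneg (α := ℝ) #U)]
  have hsqrt : #U * D / 2 ≤ β * √(#U * #W) := by linarith
  have hsq : (#U * D / 2) ^ 2 ≤ β ^ 2 * (#U * #W) := by
    calc (#U * D / 2) ^ 2 ≤ (β * √(#U * #W)) ^ 2 := pow_le_pow_left₀ (by positivity) hsqrt 2
      _ = β ^ 2 * (#U * #W) := by rw [mul_pow, Real.sq_sqrt (by positivity)]
  rcases (#U).eq_zero_or_pos with hU | hU
  · simp only [hU, Nat.cast_zero, zero_mul]
    positivity
  · refine le_of_mul_le_mul_left ?_ (Nat.cast_pos.mpr hU : (0 : ℝ) < #U)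
    linarith

variable {s : V → ℤ} (hs : ∀ v, s v = 1 ∨ s v = -1)
include hs

lemma graphMajStep_eq_one_or_neg_one (v : V) :
    graphMajStep G s v = 1 ∨ graphMajStep G s v = -1 := by
  unfold graphMajStep
  dsimp only
  split_ifs <;> simp [hs v]

lemma degree_le_two_mul_card_adj_neg_one {v : V} (hv : graphMajStep G s v = -1) :
    G.degree v ≤ 2 * #{u ∈ ({w | s w = -1} : Finset V) | G.Adj v u} := by
  have hnonpos : ∑ u ∈ G.neighborFinset v, s u ≤ 0 := by
    by_contra! h
    simp [graphMajStep, h] at hv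
  have hneg : {u ∈ G.neighborFinset v | s u = -1} =
      {u ∈ ({w | s w = -1} : Finset V) | G.Adj v u} := by
    ext u
    simp [and_comm]
  rw [sum_eq_card_sub_two_mul_card_filter_eq_neg_one hs, G.card_neighborFinset_eq_degree,
    hneg] at hnonpos
  omega

end

theorem jumbled_majority_step_amplify_general {V : Type*} [Fintype V]
    (G : SimpleGraph V) [DecidableRel G.Adj] (δ p β α : ℝ)
    (hδ : δ ∈ Set.Ioo (0 : ℝ) 1) (hp : p ∈ Set.Ioo (0 : ℝ) 1)
    (hjumbled : IsJumbled G p β)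
    (hdeg : ∀ v : V, δ * (Fintype.card V) * p ≤ (G.degree v : ℝ))
    (s : V → ℤ) (hs : ∀ v, s v = 1 ∨ s v = -1)
    (hα : α ≤ δ/2)
    (hsum : (1 - α) * (Fintype.card V) ≤ ((∑ v, s v : ℤ) : ℝ)) :
    (1 - α * (16 * β ^ 2 / (δ ^ 2 * (Fintype.card V : ℝ) ^ 2 * p ^ 2))) *
        (Fintype.card V) ≤ ((∑ v, graphMajStep G s v : ℤ) : ℝ) := by
  obtain ⟨hδ0, -⟩ := hδ
  obtain ⟨hp0, -⟩ := hp
  rcases (Fintype.card V).eq_zero_or_pos with hV | hV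
  · have := Fintype.card_eq_zero_iff.mp hV
    simp
  rw [sum_eq_card_sub_two_mul_card_filter_eq_neg_one hs, card_univ] at hsum
  rw [sum_eq_card_sub_two_mul_card_filter_eq_neg_one (graphMajStep_eq_one_or_neg_one G hs),
    card_univ]
  push_cast at hsum ⊢
  set n : ℝ := (Fintype.card V : ℝ)
  set M : Finset V := {v | s v = -1}
  set M' : Finset V := {v | graphMajStep G s v = -1}
  have hneighbors : ∀ v ∈ M', δ * n * p / 2 ≤ #{w ∈ M | G.Adj v w} := fun v hv => by
    have hdv : (G.degree v : ℝ) ≤ 2 * #{w ∈ M | G.Adj v w} := by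
      exact_mod_cast degree_le_two_mul_card_adj_neg_one G hs (mem_filter.mp hv).2
    linarith [hdeg v]
  have hpM : p * #M ≤ δ * n * p / 2 / 2 := by
    nlinarith [mul_le_mul_of_nonneg_right hα (by positivity : 0 ≤ p * n)]
  have hM' := hjumbled.card_mul_sq_le (by positivity) hpM hneighbors
  have h2M' : 2 * (#M' : ℝ) ≤ 16 * β ^ 2 * (α * n) / (δ ^ 2 * n ^ 2 * p ^ 2) := by
    rw [le_div_iff₀ (by positivity)]
    nlinarith [sq_nonneg β]
  calc (1 - α * (16 * β ^ 2 / (δ ^ 2 * n ^ 2 * p ^ 2))) * n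
      = n - 16 * β ^ 2 * (α * n) / (δ ^ 2 * n ^ 2 * p ^ 2) := by ring
    _ ≤ n - 2 * #M' := by linarith

/-- **One majority step amplifies near-unanimity on jumbled graphs.**
If `G` is a `(p,β)`-jumbled graph on `n` vertices with minimum degree at least `δnp`
and the ±1 opinion `s` satisfies `∑ᵥ s(v) ≥ (1 - α) n` for some `α ≤ δ/2`, then after
one step of majority dynamics `∑ᵥ s'(v) ≥ (1 - α · 16β²/(δ²n²p²)) n`. -/
theorem jumbled_majority_step_amplify {V : Type*} [Fintype V]
    (G : SimpleGraph V) [DecidableRel G.Adj] (δ p β α : ℝ)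
    (hδ : δ ∈ Set.Ioo (0 : ℝ) 1) (hp : p ∈ Set.Ioo (0 : ℝ) 1) (hβ : 0 < β)
    (hjumbled : IsJumbled G p β)
    (hdeg : ∀ v : V, δ * (Fintype.card V) * p ≤ (G.degree v : ℝ))
    (s : V → ℤ) (hs : ∀ v, s v = 1 ∨ s v = -1)
    (hα : α ≤ δ/2)
    (hsum : (1 - α) * (Fintype.card V) ≤ ((∑ v, s v : ℤ) : ℝ)) :
    (1 - α * (16 * β ^ 2 / (δ ^ 2 * (Fintype.card V : ℝ) ^ 2 * p ^ 2))) *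
        (Fintype.card V) ≤ ((∑ v, graphMajStep G s v : ℤ) : ℝ) :=
  jumbled_majority_step_amplify_general G δ p β α hδ hp hjumbled hdeg s hs hα hsum
end
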